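/- arXiv:1708.04901 — 5 statements merged into one kernel-verified Lean document; each statement's English description precedes it below -/
import Mathlib

section
/- Let X = {x_0, x_1, ..., x_N} and Y = {y_0, y_1, ..., y_M} be two strictly convex finite sequences of real numbers. Suppose there exist indices u < N and v < M such that the interval [x_u, x_{u+1}] is contained in [y_v, y_{v+1}]. Then the concatenated sequence x_0, x_1, ..., x_u, y_{v+1}, y_{v+2}, ..., y_M is strictly convex. -/
/-- Gluing lemma: two strictly convex (strictly increasing) sequences with a
nested gap can be concatenated into a strictly convex sequence. -/
theorem glue_convex (N M u v : ℕ) (x y : ℕ → ℝ)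
    (hx_mono : ∀ i, i < N → x i < x (i + 1))
    (hy_mono : ∀ j, j < M → y j < y (j + 1))
    (hx_conv : ∀ i, i + 2 ≤ N → x (i + 1) - x i < x (i + 2) - x (i + 1))
    (hy_conv : ∀ j, j + 2 ≤ M → y (j + 1) - y j < y (j + 2) - y (j + 1))
    (hu : u < N) (hv : v < M)
    (h1 : y v ≤ x u) (h2 : x (u + 1) ≤ y (v + 1)) :
    let z : ℕ → ℝ := fun i => if i ≤ u then x i else y (v + (i - u))
    let L : ℕ := u + (M - v)
    (∀ i, i < L → z i < z (i + 1)) ∧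
      (∀ i, i + 2 ≤ L → z (i + 1) - z i < z (i + 2) - z (i + 1)) := by
  intro z L
  have hL : L = u + (M - v) := rfl
  have hzx : ∀ i, i ≤ u → z i = x i := fun i h => if_pos h
  have hzy : ∀ i, u < i → z i = y (v + (i - u)) := fun i h => if_neg (by omega)
  constructor
  · intro i hiL
    rw [hL] at hiL
    rcases lt_trichotomy i u with h | h | h
    · rw [hzx i (le_of_lt h), hzx (i + 1) (by omega)]
      exact hx_mono i (by omega)
    · subst h
      rw [hzx i le_rfl, hzy (i + 1) (by omega)]
      have he : v + (i + 1 - i) = v + 1 := by omega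
      rw [he]
      exact lt_of_lt_of_le (hx_mono i hu) h2
    · rw [hzy i h, hzy (i + 1) (by omega)]
      have he : v + (i + 1 - u) = v + (i - u) + 1 := by omega
      rw [he]
      exact hy_mono _ (by omega)
  · intro i hiL
    rw [hL] at hiL
    rcases lt_trichotomy (i + 2) u with h | h | h
    · rw [hzx i (by omega), hzx (i + 1) (by omega), hzx (i + 2) (by omega)]
      exact hx_conv i (by omega)
    · rw [hzx i (by omega), hzx (i + 1) (by omega), hzx (i + 2) (by omega)]
      exact hx_conv i (by omega)
    · rcases lt_trichotomy (i + 1) u with h' | h' | h'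
      · -- impossible since i+2 > u and i+1 < u
        omega
      · -- i + 1 = u, so i+2 = u+1
        rw [hzx i (by omega), hzx (i + 1) (by omega), hzy (i + 2) (by omega)]
        have he : v + (i + 2 - u) = v + 1 := by omega
        rw [he]
        have hc := hx_conv i (by omega)
        have : x (i + 2) ≤ y (v + 1) := by
          have : i + 2 = u + 1 := by omega
          rw [this]; exact h2
        have hxu : x (i + 1) = x u := by rw [h']
        calc x (i + 1) - x i < x (i + 2) - x (i + 1) := hc
          _ ≤ y (v + 1) - x (i + 1) := by linarith
      · rcases lt_trichotomy i u with h'' | h'' | h''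
        ·
          omega
        · -- i = u
          subst h''
          rw [hzx i le_rfl, hzy (i + 1) (by omega), hzy (i + 2) (by omega)]
          have he1 : v + (i + 1 - i) = v + 1 := by omega
          have he2 : v + (i + 2 - i) = v + 2 := by omega
          rw [he1, he2]
          have hc := hy_conv v (by omega)
          calc y (v + 1) - x i ≤ y (v + 1) - y v := by linarith
            _ < y (v + 2) - y (v + 1) := hc
            _ = y (v + 2) - y (v + 1) := rfl
        · -- i > u : all y
          rw [hzy i h'', hzy (i + 1) (by omega), hzy (i + 2) (by omega)]
          have he1 : v + (i + 1 - u) = v + (i - u) + 1 := by omega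
          have he2 : v + (i + 2 - u) = v + (i - u) + 2 := by omega
          rw [he1, he2]
          exact hy_conv _ (by omega)
end

section
/- Let X and Y be strictly increasing finite real sequences where X has all consecutive gaps at most delta, Y has all consecutive gaps at least Delta, with 0 < delta < Delta. Suppose there are an index v and an integer m >= 1 such that y_0 <= x_v and x_{v+m} <= y_m. Then there exist indices u in [v, v+m-1] and t in [0, m-1] such that [x_u, x_{u+1}] is contained in [y_t, y_{t+1}]. -/
/-- Pigeonhole: if the slow sequence x (gaps ≤ δ) starts above y₀ and is overtaken by
the fast sequence y (gaps ≥ Δ > δ) within m steps, then some gap of x is nested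
inside a gap of y. -/
theorem pigeonhole_nested_gap (x y : ℕ → ℝ) (δ Δ : ℝ) (hδ : 0 < δ) (hδΔ : δ < Δ)
    (hx_mono : ∀ i : ℕ, x i < x (i + 1))
    (hy_mono : ∀ j : ℕ, y j < y (j + 1))
    (hx_gap : ∀ i : ℕ, x (i + 1) - x i ≤ δ)
    (hy_gap : ∀ j : ℕ, y (j + 1) - y j ≥ Δ)
    (v m : ℕ) (hm : 1 ≤ m)
    (hstart : y 0 ≤ x v) (hend : x (v + m) ≤ y m) :
    ∃ u, v ≤ u ∧ u ≤ v + m - 1 ∧ ∃ t, t ≤ m - 1 ∧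
      y t ≤ x u ∧ x (u + 1) ≤ y (t + 1) := by
  classical
  set P : ℕ → Prop := fun k => y k ≤ x (v + k) with hP
  set k := Nat.findGreatest P (m - 1) with hk
  have hk_le : k ≤ m - 1 := Nat.findGreatest_le _
  have hPk : P k := Nat.findGreatest_spec (Nat.zero_le _) (by simpa [hP] using hstart)
  refine ⟨v + k, Nat.le_add_right _ _, by omega, k, hk_le, hPk, ?_⟩
  rcases eq_or_lt_of_le hk_le with heq | hlt
  · have : v + k + 1 = v + m := by omega
    rw [this, heq]
    have : m - 1 + 1 = m := by omega
    rw [this]; exact hend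
  · have hnot : ¬ P (k + 1) :=
      Nat.findGreatest_is_greatest (n := m - 1) (by omega) (by omega)
    have h2 : x (v + k + 1) < y (k + 1) := by
      have := not_le.mp hnot
      simpa [← add_assoc] using this
    linarith
end

section
/- Let n be sufficiently large, alpha = 1/n^2, gamma = 1/(1000 n^3), and k an integer with 0.999 n <= k <= n. Define b^{(k)}_i = (k - alpha k^2) + gamma i^2 + 2 i k alpha for integers i in [-n, 2n]. Then the number of indices i in [-n, 2n] such that b^{(k)}_i lies in the interval [k - 0.9, k + 0.9] is at least n/3. -/
/-- At least n/3 elements of the block B_k lie in the central interval [k - 0.9, k + 0.9]. -/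
theorem central_count (n : ℕ) (hn : n ≥ 10 ^ 4) (k : ℤ)
    (hk1 : 0.999 * (n : ℝ) ≤ (k : ℝ)) (hk2 : (k : ℝ) ≤ (n : ℝ)) :
    let α : ℝ := 1 / (n : ℝ) ^ 2
    let γ : ℝ := 1 / (1000 * (n : ℝ) ^ 3)
    let b : ℤ → ℝ := fun i =>
      ((k : ℝ) - α * (k : ℝ) ^ 2) + γ * (i : ℝ) ^ 2 + 2 * (i : ℝ) * (k : ℝ) * α
    (((Finset.Icc (-(n : ℤ)) (2 * (n : ℤ))).filter
      (fun i => (k : ℝ) - 0.9 ≤ b i ∧ b i ≤ (k : ℝ) + 0.9)).card : ℝ) ≥ (n : ℝ) / 3 := by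
  intro α γ b
  have hn' : (10000:ℝ) ≤ (n:ℝ) := by exact_mod_cast hn
  have hnpos : (0:ℝ) < (n:ℝ) := by linarith
  have hkn : k ≤ (n:ℤ) := by exact_mod_cast hk2
  have hkR : (9990:ℝ) ≤ (k:ℝ) := by nlinarith
  have hkpos : (9990:ℤ) ≤ k := by exact_mod_cast hkR
  set S : Finset ℤ := Finset.Icc (k/2) (k/2 + (n:ℤ)/3) with hS
  have hdiv2 : 2 * (k/2) ≤ k ∧ k - 1 ≤ 2 * (k/2) := by omega
  have hdiv3 : 3 * ((n:ℤ)/3) ≤ (n:ℤ) ∧ (n:ℤ) - 2 ≤ 3 * ((n:ℤ)/3) := by omega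
  have hsub : S ⊆ (Finset.Icc (-(n : ℤ)) (2 * (n : ℤ))).filter
      (fun i => (k : ℝ) - 0.9 ≤ b i ∧ b i ≤ (k : ℝ) + 0.9) := by
    intro i hi
    rw [hS, Finset.mem_Icc] at hi
    obtain ⟨h1, h2⟩ := hi
    rw [Finset.mem_filter, Finset.mem_Icc]
    have hi0 : 0 ≤ i := by omega
    have hi2n : i ≤ 2 * (n:ℤ) := by omega
    have hiR : (0:ℝ) ≤ (i:ℝ) := by exact_mod_cast hi0
    have hi2nR : (i:ℝ) ≤ 2 * (n:ℝ) := by exact_mod_cast hi2n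
    have h2ik : (k:ℝ) - 1 ≤ 2 * (i:ℝ) := by
      have : k - 1 ≤ 2 * i := by omega
      exact_mod_cast this
    have hiub : 2 * (i:ℝ) ≤ (k:ℝ) + 2 * (n:ℝ) / 3 := by
      have h3 : 3 * (2 * i) ≤ 3 * k + 2 * (n:ℤ) := by omega
      have := (by exact_mod_cast h3 : 3 * (2 * (i:ℝ)) ≤ 3 * (k:ℝ) + 2 * (n:ℝ))
      linarith
    have hn2 : (0:ℝ) < (n:ℝ)^2 := by positivity
    have hn3 : (0:ℝ) < 1000 * (n:ℝ)^3 := by positivity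
    have hb : b i = (k:ℝ) + (2*(i:ℝ) - (k:ℝ))*(k:ℝ)/(n:ℝ)^2 + (i:ℝ)^2/(1000*(n:ℝ)^3) := by
      simp only [b, α, γ]
      field_simp
      ring
    have t2a : (0:ℝ) ≤ (i:ℝ)^2/(1000*(n:ℝ)^3) := by positivity
    have t2b : (i:ℝ)^2/(1000*(n:ℝ)^3) ≤ 0.1 := by
      rw [div_le_iff₀ hn3]; nlinarith
    have t1a : -(0.8:ℝ) ≤ (2*(i:ℝ) - (k:ℝ))*(k:ℝ)/(n:ℝ)^2 := by
      rw [le_div_iff₀ hn2]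
      nlinarith [sq_nonneg ((k:ℝ) - (n:ℝ))]
    have t1b : (2*(i:ℝ) - (k:ℝ))*(k:ℝ)/(n:ℝ)^2 ≤ 0.7 := by
      rw [div_le_iff₀ hn2]
      nlinarith
    refine ⟨⟨by omega, hi2n⟩, ?_, ?_⟩
    · rw [hb]; linarith
    · rw [hb]; linarith
  have hcard : S.card = ((n:ℤ)/3 + 1).toNat := by
    rw [hS, Int.card_Icc]
    congr 1
    omega
  have hcardR : ((n:ℝ)/3 : ℝ) ≤ (S.card : ℝ) := by
    rw [hcard]
    have h1 : (n:ℤ) ≤ 3 * ((n:ℤ)/3 + 1) := by omega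
    have h2 : (n:ℝ) ≤ 3 * (((n:ℤ)/3 + 1 : ℤ) : ℝ) := by exact_mod_cast h1
    have h3 : ((((n:ℤ)/3 + 1).toNat : ℕ) : ℝ) = (((n:ℤ)/3 + 1 : ℤ) : ℝ) := by
      have h0 : 0 ≤ (n:ℤ)/3 + 1 := by omega
      rw [← Int.cast_natCast, Int.toNat_of_nonneg h0]
    rw [h3]
    linarith
  have := Finset.card_le_card hsub
  calc ((((Finset.Icc (-(n : ℤ)) (2 * (n : ℤ))).filter
      (fun i => (k : ℝ) - 0.9 ≤ b i ∧ b i ≤ (k : ℝ) + 0.9)).card : ℕ) : ℝ)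
      ≥ (S.card : ℝ) := by exact_mod_cast this
    _ ≥ (n:ℝ)/3 := hcardR
end

section
/- There exist arbitrarily large strictly convex sets A of reals such that for at least C*|A|^{1/2} values of x (for some absolute constant C > 0), the equation a_1 - a_2 = x has at least C*|A|^{1/2} solutions (a_1, a_2) with a_1, a_2 in A. -/
/-!
The set `{-√s : s = 0, …, M²}`, listed increasingly as `-√(M² - i)`, is strictly convex
because `t ↦ -√(M² - t)` is strictly convex and increasing, and it contains the `M + 1` integers
`-M, …, 0` (at `s = (M - j)²`). Each `k < M / 2` is therefore the difference of more than `M / 2`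
pairs of these integers, while the set has only `M² + 1` elements.
-/

/-- A finite set of reals is strictly convex. -/
def IsConvexFinset (A : Finset ℝ) : Prop :=
  ∃ a : ℕ → ℝ, (∀ i, i + 1 < A.card → a i < a (i + 1)) ∧
    A = (Finset.range A.card).image a ∧
    (∀ i, i + 2 < A.card → a (i + 1) - a i < a (i + 2) - a (i + 1))

section

open Finset

variable {f : ℝ → ℝ} {n : ℕ}

lemma card_image_range_of_strictMonoOn (hmono : StrictMonoOn f (Set.Icc 0 (n : ℝ))) :
    #((range (n + 1)).image fun i : ℕ => f i) = n + 1 := by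
  rw [card_image_of_injOn, card_range]
  intro i hi j hj hij
  simp only [coe_range, Set.mem_Iio] at hi hj
  exact_mod_cast hmono.injOn ⟨i.cast_nonneg, by exact_mod_cast Nat.lt_succ_iff.1 hi⟩
    ⟨j.cast_nonneg, by exact_mod_cast Nat.lt_succ_iff.1 hj⟩ hij

theorem isConvexFinset_image_range (hconv : StrictConvexOn ℝ (Set.Icc 0 (n : ℝ)) f)
    (hmono : StrictMonoOn f (Set.Icc 0 (n : ℝ))) :
    IsConvexFinset ((range (n + 1)).image fun i : ℕ => f i) := by
  have mem {i : ℕ} (hi : i ≤ n) : (i : ℝ) ∈ Set.Icc (0 : ℝ) n :=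
    ⟨i.cast_nonneg, by exact_mod_cast hi⟩
  rw [IsConvexFinset, card_image_range_of_strictMonoOn hmono]
  refine ⟨fun i : ℕ => f i, fun i hi => ?_, rfl, fun i hi => ?_⟩
  · exact hmono (mem (by omega)) (mem (by omega)) (by push_cast; linarith)
  · have := hconv.slope_strict_mono_adjacent (mem (i := i) (by omega))
      (mem (i := i + 2) (by omega)) (show (i : ℝ) < i + 1 by linarith)
      (show (i : ℝ) + 1 < (i + 2 : ℕ) by push_cast; linarith)
    push_cast at this ⊢
    simpa [show (i : ℝ) + 2 - (i + 1) = 1 by ring] using this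

lemma le_card_filter_sub_eq {A : Finset ℝ} {c : ℝ} {L : ℕ} (hA : ∀ j < L, c + j ∈ A) (k : ℕ) :
    L - k ≤ #{p ∈ A ×ˢ A | p.1 - p.2 = (k : ℝ)} := by
  calc L - k = #(range (L - k)) := (card_range _).symm
    _ ≤ _ := card_le_card_of_injOn (fun j : ℕ => (c + (j + k : ℕ), c + j))
      (fun j hj => ?_) (fun i _ j _ hij => ?_)
  · simp only [coe_range, Set.mem_Iio] at hj
    simp only [coe_filter, mem_product, Set.mem_ofPred_eq]
    exact ⟨⟨hA _ (by omega), hA _ (by omega)⟩, by push_cast; ring⟩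
  · simpa using congrArg Prod.snd hij

end

lemma strictConvexOn_neg_sqrt_sub (c : ℝ) :
    StrictConvexOn ℝ (Set.Iic c) fun t => -√(c - t) := by
  refine ⟨convex_Iic c, fun x hx y hy hxy a b ha hb hab => ?_⟩
  have := Real.strictConcaveOn_sqrt.2 (x := c - x) (y := c - y)
    (sub_nonneg.2 hx : 0 ≤ c - x) (sub_nonneg.2 hy : 0 ≤ c - y)
    (by intro h; apply hxy; linarith) ha hb hab
  have hc : a * (c - x) + b * (c - y) = c - (a * x + b * y) := by linear_combination c * hab
  simp only [smul_eq_mul, hc] at this ⊢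
  linarith

lemma strictMonoOn_neg_sqrt_sub (c : ℝ) : StrictMonoOn (fun t => -√(c - t)) (Set.Iic c) :=
  fun _ _ _ hy hxy => neg_lt_neg (Real.sqrt_lt_sqrt (sub_nonneg.2 hy) (by linarith))

noncomputable def negSqrtSet (N : ℕ) : Finset ℝ :=
  (Finset.range (N + 1)).image fun i : ℕ => -√((N : ℝ) - i)

lemma card_negSqrtSet (N : ℕ) : (negSqrtSet N).card = N + 1 :=
  card_image_range_of_strictMonoOn ((strictMonoOn_neg_sqrt_sub _).mono Set.Icc_subset_Iic_self)

lemma isConvexFinset_negSqrtSet (N : ℕ) : IsConvexFinset (negSqrtSet N) :=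
  isConvexFinset_image_range ((strictConvexOn_neg_sqrt_sub _).subset Set.Icc_subset_Iic_self
    (convex_Icc _ _)) ((strictMonoOn_neg_sqrt_sub _).mono Set.Icc_subset_Iic_self)

lemma neg_add_mem_negSqrtSet_sq {M j : ℕ} (hj : j ≤ M) : -(M : ℝ) + j ∈ negSqrtSet (M ^ 2) := by
  obtain ⟨d, rfl⟩ := Nat.exists_eq_add_of_le hj
  refine Finset.mem_image.2 ⟨j * (j + 2 * d), Finset.mem_range.2 ?_, ?_⟩
  · exact Nat.lt_succ_of_le (by nlinarith)
  · push_cast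
    rw [show ((j : ℝ) + d) ^ 2 - j * (j + 2 * d) = d ^ 2 by ring, Real.sqrt_sq d.cast_nonneg]
    ring

/-- There are arbitrarily large strictly convex sets A such that for ≥ C√|A| values
of x the equation a₁ - a₂ = x has ≥ C√|A| solutions in A × A. -/
theorem many_repeated_differences :
    ∃ C : ℝ, 0 < C ∧ ∀ m : ℕ, ∃ A : Finset ℝ, A.card > m ∧ IsConvexFinset A ∧
      ∃ X : Finset ℝ, (X.card : ℝ) ≥ C * Real.sqrt A.card ∧
        ∀ x ∈ X, (((A ×ˢ A).filter (fun p => p.1 - p.2 = x)).card : ℝ) ≥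
          C * Real.sqrt A.card := by
  refine ⟨1 / 3, by norm_num, fun m => ?_⟩
  obtain ⟨K, hK⟩ : ∃ K, K = m + 1 := ⟨_, rfl⟩
  have hsqrt : 1 / 3 * √((negSqrtSet ((2 * K) ^ 2)).card : ℝ) ≤ K := by
    have hK1 : (1 : ℝ) ≤ K := by exact_mod_cast (by omega : 1 ≤ K)
    have : √(((2 * K) ^ 2 + 1 : ℕ) : ℝ) ≤ 3 * K :=
      (Real.sqrt_le_left (by positivity)).2 (by push_cast; nlinarith)
    rw [card_negSqrtSet]
    linarith
  refine ⟨negSqrtSet ((2 * K) ^ 2), ?_, isConvexFinset_negSqrtSet _,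
    (Finset.range K).map Nat.castEmbedding, ?_, ?_⟩
  · rw [card_negSqrtSet]; nlinarith
  · simpa using hsqrt
  · simp only [Finset.mem_map, Finset.mem_range, Nat.castEmbedding_apply]
    rintro _ ⟨k, hk, rfl⟩
    have hsol := le_card_filter_sub_eq (L := 2 * K + 1)
      (fun j hj => neg_add_mem_negSqrtSet_sq (M := 2 * K) (by omega)) k
    exact hsqrt.trans (by exact_mod_cast (show K ≤ 2 * K + 1 - k by omega).trans hsol)
end

section
/- Let n >= 10^4, alpha = 1/n^2, gamma = 1/(1000 n^3). For integers k, k' with 0.999 n <= k < k' <= n, k' - k >= 4, and blocks B_k = {b^{(k)}_i : i in [-n, 2n]}, B_{k'} defined by b^{(k)}_i = (k - alpha k^2) + gamma i^2 + 2 i k alpha, every element of B_k is less than k + 3.1 and every element of B_{k'} is greater than k' - 3 >= k + 1; in particular if k' - k >= 8 then max B_k < min B_{k'}. -/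
/-- Ordering of distant blocks: every element of B_k is < k + 3.1, every element of
B_{k'} is > k' - 3 ≥ k + 1, and if k' - k ≥ 8 then max B_k < min B_{k'}. -/
theorem block_ordering (n : ℕ) (hn : n ≥ 10 ^ 4) (k k' : ℤ)
    (hk1 : 0.999 * (n : ℝ) ≤ (k : ℝ)) (hkk' : k < k') (hk'2 : (k' : ℝ) ≤ (n : ℝ))
    (hgap : k' - k ≥ 4) :
    let α : ℝ := 1 / (n : ℝ) ^ 2
    let γ : ℝ := 1 / (1000 * (n : ℝ) ^ 3)
    let b : ℤ → ℤ → ℝ := fun l i =>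
      ((l : ℝ) - α * (l : ℝ) ^ 2) + γ * (i : ℝ) ^ 2 + 2 * (i : ℝ) * (l : ℝ) * α
    (∀ i ∈ Set.Icc (-(n : ℤ)) (2 * (n : ℤ)), b k i < (k : ℝ) + 3.1) ∧
      (∀ i ∈ Set.Icc (-(n : ℤ)) (2 * (n : ℤ)), b k' i > (k' : ℝ) - 3) ∧
      (k' : ℝ) - 3 ≥ (k : ℝ) + 1 ∧
      (k' - k ≥ 8 → ∀ i ∈ Set.Icc (-(n : ℤ)) (2 * (n : ℤ)),
        ∀ j ∈ Set.Icc (-(n : ℤ)) (2 * (n : ℤ)), b k i < b k' j) := by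
  intro α γ b
  set N : ℝ := (n : ℝ) with hNdef
  have hN : (10000 : ℝ) ≤ N := by
    rw [hNdef]; exact_mod_cast hn
  have hNpos : (0 : ℝ) < N := by linarith
  have h1000 : (0 : ℝ) < 1000 * N ^ 3 := by positivity
  have hkk'R : (k : ℝ) + 1 ≤ (k' : ℝ) := by exact_mod_cast hkk'
  have hkN : (k : ℝ) ≤ N := by linarith
  have hk'1 : 0.999 * N ≤ (k' : ℝ) := by linarith
  have hb : ∀ (l i : ℤ), b l i = (l : ℝ) +
      (-(1000 * N * (l : ℝ) ^ 2) + (i : ℝ) ^ 2 + 2000 * N * (i : ℝ) * (l : ℝ)) /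
        (1000 * N ^ 3) := by
    intro l i
    show ((l : ℝ) - 1 / N ^ 2 * (l : ℝ) ^ 2) + 1 / (1000 * N ^ 3) * (i : ℝ) ^ 2 +
        2 * (i : ℝ) * (l : ℝ) * (1 / N ^ 2) = _
    field_simp
    ring
  have hA : ∀ i ∈ Set.Icc (-(n : ℤ)) (2 * (n : ℤ)), b k i < (k : ℝ) + 3.1 := by
    intro i hi
    obtain ⟨hi1, hi2⟩ := hi
    have hi1' : -N ≤ (i : ℝ) := by rw [hNdef]; exact_mod_cast hi1
    have hi2' : (i : ℝ) ≤ 2 * N := by rw [hNdef]; exact_mod_cast hi2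
    rw [hb]
    have key : -(1000 * N * (k : ℝ) ^ 2) + (i : ℝ) ^ 2 + 2000 * N * (i : ℝ) * (k : ℝ)
        < 3.1 * (1000 * N ^ 3) := by
      nlinarith [mul_nonneg (by linarith : (0:ℝ) ≤ 2 * N - (i:ℝ))
          (by linarith : (0:ℝ) ≤ 2 * N + (i:ℝ)),
        mul_nonneg (mul_nonneg (by linarith : (0:ℝ) ≤ 2 * N - (i:ℝ))
          (by linarith : (0:ℝ) ≤ (k:ℝ))) hNpos.le,
        mul_nonneg (mul_nonneg (by linarith : (0:ℝ) ≤ N - (k:ℝ)) hNpos.le) hNpos.le,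
        mul_nonneg (mul_nonneg (by linarith : (0:ℝ) ≤ (k:ℝ) - 0.999 * N)
          (by linarith : (0:ℝ) ≤ (k:ℝ) + 0.999 * N)) hNpos.le]
    have h2 := (div_lt_iff₀ h1000).2 key
    linarith
  have hB : ∀ i ∈ Set.Icc (-(n : ℤ)) (2 * (n : ℤ)), b k' i > (k' : ℝ) - 3 := by
    intro i hi
    obtain ⟨hi1, hi2⟩ := hi
    have hi1' : -N ≤ (i : ℝ) := by rw [hNdef]; exact_mod_cast hi1
    have hi2' : (i : ℝ) ≤ 2 * N := by rw [hNdef]; exact_mod_cast hi2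
    rw [hb]
    have key : -(3 : ℝ) * (1000 * N ^ 3) <
        -(1000 * N * (k' : ℝ) ^ 2) + (i : ℝ) ^ 2 + 2000 * N * (i : ℝ) * (k' : ℝ) := by
      nlinarith [mul_nonneg (by linarith : (0:ℝ) ≤ (i:ℝ) + N)
          (by nlinarith : (0:ℝ) ≤ (i:ℝ) - N + 2000 * N * (k':ℝ)),
        mul_nonneg (mul_nonneg hNpos.le (by linarith : (0:ℝ) ≤ N - (k':ℝ)))
          (by linarith : (0:ℝ) ≤ N + (k':ℝ)),
        mul_pos hNpos hNpos]
    have h2 := (lt_div_iff₀ h1000).2 key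
    linarith
  have hgapR : (k' : ℝ) - 3 ≥ (k : ℝ) + 1 := by
    have : (4 : ℝ) ≤ (k' : ℝ) - (k : ℝ) := by exact_mod_cast hgap
    linarith
  refine ⟨hA, hB, hgapR, ?_⟩
  intro h8 i hi j hj
  have h8R : (8 : ℝ) ≤ (k' : ℝ) - (k : ℝ) := by exact_mod_cast h8
  have h1 := hA i hi
  have h2 := hB j hj
  exact lt_of_lt_of_le h1 (le_trans (by linarith : (k : ℝ) + 3.1 ≤ (k' : ℝ) - 3) h2.le)
end
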